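/- arXiv:1403.0184 — 4 statements merged into one kernel-verified Lean document; each statement's English description precedes it below -/
import Mathlib

section
/- Let f ∈ ℤ[X] be of degree d ≥ 1 with associated binary form F. Then for every prime p and every integer k ≥ 1 one has #{(a,b) ∈ [1,p^k]² : gcd(a,b,p) = 1 and p^k ∣ F(a,b)} = φ(p^k)·n_{p^k}(f), where φ is Euler's totient function. -/
open Polynomial Finset in
/-- The binary form associated to an integer polynomial `f`. -/
noncomputable def binForm (f : Polynomial ℤ) (x y : ℤ) : ℤ :=
  ∑ i ∈ Finset.range (f.natDegree + 1), f.coeff i * x ^ i * y ^ (f.natDegree - i)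

open scoped Classical in
/-- `n_{p^k}(f)`. -/
noncomputable def nRoots (f : Polynomial ℤ) (p k : ℕ) : ℕ :=
  ((Finset.range (p ^ k)).filter fun a => (p : ℤ) ^ k ∣ f.eval (a : ℤ)).card +
  ((Finset.range (p ^ k)).filter fun b => p ∣ b ∧ (p : ℤ) ^ k ∣ binForm f 1 (b : ℤ)).card

/-- The Sylvester matrix of two integer polynomials. -/
noncomputable def sylvesterMatrix (f g : Polynomial ℤ) :
    Matrix (Fin (f.natDegree + g.natDegree)) (Fin (f.natDegree + g.natDegree)) ℤ :=
  Matrix.of fun i j =>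
    if (i : ℕ) < g.natDegree then
      if (i : ℕ) ≤ (j : ℕ) ∧ (j : ℕ) ≤ (i : ℕ) + f.natDegree then
        f.coeff (f.natDegree + i - j)
      else 0
    else
      if (i : ℕ) - g.natDegree ≤ (j : ℕ) ∧ (j : ℕ) ≤ (i : ℕ) - g.natDegree + g.natDegree then
        g.coeff (g.natDegree + ((i : ℕ) - g.natDegree) - j)
      else 0

/-- The resultant of two integer polynomials. -/
noncomputable def resultant (f g : Polynomial ℤ) : ℤ := (sylvesterMatrix f g).det

/-- The discriminant of an integer polynomial. -/
noncomputable def disc (f : Polynomial ℤ) : ℤ :=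
  ((-1) ^ (f.natDegree * (f.natDegree - 1) / 2) *
    resultant f (Polynomial.derivative f)) / f.leadingCoeff

/-- Murphy's `α_p(f)`. -/
noncomputable def alphaP (f : Polynomial ℤ) (p : ℕ) : ℝ :=
  Real.log p * (1 / ((p : ℝ) - 1) -
    ((p : ℝ) / ((p : ℝ) + 1)) * ∑' k : ℕ, (nRoots f p (k + 1) : ℝ) / (p : ℝ) ^ (k + 1))

/-!
Reduce modulo `p ^ k`: the pairs counted are the pairs `(x, y)` in `(ℤ/p^k)²` with `x` or `y` a
unit and `F(x, y) = 0`. Since `F(x u, y u) = u ^ d F(x, y)`, scaling by units preserves these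
zeros. Pairs with `y` a unit are exactly the `(r u, u)` with `F(r, 1) = 0`, and pairs with `y` not
a unit (so `x` a unit) are exactly the `(u, s u)` with `p ∣ s` and `F(1, s) = 0`. So each of the
`n_{p^k}(f)` roots contributes `φ(p^k)` pairs, one for each unit `u`.
-/

open Finset

section UnitScaling

open scoped Classical

variable {R : Type*} [CommRing R]

noncomputable def prodUnitsEquivIsUnitSnd (P : R → R → Prop)
    (hP : ∀ x y (u : Rˣ), P (x * u) (y * u) ↔ P x y) :
    {r // P r 1} × Rˣ ≃ {xy : R × R // IsUnit xy.2 ∧ P xy.1 xy.2} where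
  toFun ru := ⟨(ru.1 * ru.2, ru.2), ru.2.isUnit, by simpa using (hP ru.1 1 ru.2).2 ru.1.2⟩
  invFun xy := (⟨xy.1.1 * ↑xy.2.1.unit⁻¹,
    (hP _ 1 xy.2.1.unit).1 (by simpa [mul_assoc] using xy.2.2)⟩, xy.2.1.unit)
  left_inv ru := by ext <;> simp
  right_inv xy := by ext <;> simp [mul_assoc]

variable [Fintype R] [DecidableEq R]

theorem card_filter_isUnit_snd_and (P : R → R → Prop)
    (hP : ∀ x y (u : Rˣ), P (x * u) (y * u) ↔ P x y) :
    #{xy : R × R | IsUnit xy.2 ∧ P xy.1 xy.2} = #{r | P r 1} * Fintype.card Rˣ := by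
  rw [← Fintype.card_subtype, ← Fintype.card_subtype, ← Fintype.card_prod]
  exact (Fintype.card_congr (prodUnitsEquivIsUnitSnd P hP)).symm

theorem card_filter_isUnit_fst_and (P : R → R → Prop)
    (hP : ∀ x y (u : Rˣ), P (x * u) (y * u) ↔ P x y) :
    #{xy : R × R | IsUnit xy.1 ∧ P xy.1 xy.2} = Fintype.card Rˣ * #{s | P 1 s} := by
  rw [mul_comm, ← card_filter_isUnit_snd_and (fun x y => P y x) fun x y u => hP y x u]
  exact card_equiv (Equiv.prodComm R R) (by simp)

theorem card_filter_zeros_of_homogeneous (F : R → R → R) (d : ℕ)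
    (hF : ∀ x y c, F (x * c) (y * c) = c ^ d * F x y) :
    #{xy : R × R | (IsUnit xy.1 ∨ IsUnit xy.2) ∧ F xy.1 xy.2 = 0} =
      Fintype.card Rˣ * (#{r | F r 1 = 0} + #{s | ¬IsUnit s ∧ F 1 s = 0}) := by
  have hF_unit (x y : R) (u : Rˣ) : F (x * u) (y * u) = 0 ↔ F x y = 0 := by
    rw [hF, (u.isUnit.pow d).mul_right_eq_zero]
  calc #{xy : R × R | (IsUnit xy.1 ∨ IsUnit xy.2) ∧ F xy.1 xy.2 = 0}
      = #{xy : R × R | IsUnit xy.2 ∧ F xy.1 xy.2 = 0} +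
          #{xy : R × R | IsUnit xy.1 ∧ (¬IsUnit xy.2 ∧ F xy.1 xy.2 = 0)} := by
        rw [← card_filter_add_card_filter_not (p := fun xy : R × R => IsUnit xy.2), filter_filter,
          filter_filter]
        congr 2 <;> ext <;> simp only [mem_filter, mem_univ, true_and] <;> tauto
    _ = #{r | F r 1 = 0} * Fintype.card Rˣ + Fintype.card Rˣ * #{s | ¬IsUnit s ∧ F 1 s = 0} := by
        congr 1
        · convert card_filter_isUnit_snd_and (fun x y => F x y = 0) hF_unit
        · convert card_filter_isUnit_fst_and (fun x y => ¬IsUnit y ∧ F x y = 0)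
            fun x y u => and_congr (Units.isUnit_mul_units y u).not (hF_unit x y u)
    _ = _ := by ring

end UnitScaling

theorem card_filter_eq_card_filter_of_bijOn {α β : Type*} {s : Finset α} {t : Finset β}
    {i : α → β} (hi : Set.BijOn i s t) {p : α → Prop} {q : β → Prop} [DecidablePred p]
    [DecidablePred q] (hpq : ∀ a ∈ s, p a ↔ q (i a)) : #{a ∈ s | p a} = #{b ∈ t | q b} := by
  refine card_nbij i (fun a ha => ?_) (hi.injOn.mono (coe_subset.2 (filter_subset _ _)))
    fun b hb => ?_
  · rw [mem_coe, mem_filter] at ha ⊢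
    exact ⟨hi.mapsTo ha.1, (hpq a ha.1).1 ha.2⟩
  · rw [mem_coe, mem_filter] at hb
    obtain ⟨a, ha, rfl⟩ := hi.surjOn hb.1
    exact ⟨a, mem_filter.2 ⟨ha, (hpq a ha).2 hb.2⟩, rfl⟩

namespace ZMod

variable (N : ℕ) [NeZero N]

theorem bijOn_natCast_Iio : Set.BijOn (Nat.cast : ℕ → ZMod N) (Set.Iio N) Set.univ := by
  refine ⟨Set.mapsTo_univ _ _, fun a ha b hb hab => ?_,
    fun x _ => ⟨x.val, x.val_lt, x.natCast_zmod_val⟩⟩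
  rw [← val_natCast_of_lt ha, ← val_natCast_of_lt hb, hab]

theorem bijOn_natCast_Icc : Set.BijOn (Nat.cast : ℕ → ZMod N) (Set.Icc 1 N) Set.univ := by
  refine ⟨Set.mapsTo_univ _ _, fun a ha b hb hab => ?_, fun x _ => ?_⟩
  · obtain ⟨ha1, haN⟩ := ha
    obtain ⟨hb1, hbN⟩ := hb
    exact ((natCast_eq_natCast_iff a b N).1 hab).eq_of_abs_lt
      (abs_sub_lt_iff.2 ⟨by omega, by omega⟩)
  · by_cases hx : x = 0
    · exact ⟨N, ⟨NeZero.one_le, le_rfl⟩, by rw [hx, natCast_self]⟩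
    · exact ⟨x.val, ⟨Nat.one_le_iff_ne_zero.2 ((val_ne_zero x).2 hx), x.val_lt.le⟩,
        x.natCast_zmod_val⟩

theorem isUnit_natCast_primePow_iff {p k : ℕ} (hp : p.Prime) (hk : k ≠ 0) (a : ℕ) :
    IsUnit (a : ZMod (p ^ k)) ↔ ¬p ∣ a := by
  rw [isUnit_iff_coprime, Nat.coprime_pow_right_iff (Nat.pos_of_ne_zero hk), Nat.coprime_comm,
    hp.coprime_iff_not_dvd]

theorem intCast_zmod_pow_eq_zero_iff (p k : ℕ) (z : ℤ) :
    (z : ZMod (p ^ k)) = 0 ↔ (p : ℤ) ^ k ∣ z := by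
  rw [intCast_zmod_eq_zero_iff_dvd, Nat.cast_pow]

end ZMod

theorem Nat.gcd_gcd_prime_eq_one_iff {p : ℕ} (hp : p.Prime) (a b : ℕ) :
    Nat.gcd (Nat.gcd a b) p = 1 ↔ ¬(p ∣ a ∧ p ∣ b) := by
  rw [← Nat.Coprime, Nat.coprime_comm, hp.coprime_iff_not_dvd, Nat.dvd_gcd_iff]

open Polynomial

section EvalBinForm

variable {R : Type*} [CommRing R] (f : ℤ[X])

-- The coefficients are cast one by one: `f.map` could drop in degree and so change the form.
noncomputable def evalBinForm (x y : R) : R :=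
  ∑ i ∈ range (f.natDegree + 1), (f.coeff i : R) * x ^ i * y ^ (f.natDegree - i)

theorem Int.cast_binForm (a b : ℤ) : ((binForm f a b : ℤ) : R) = evalBinForm f (a : R) b := by
  simp [binForm, evalBinForm]

theorem evalBinForm_mul_mul (x y c : R) :
    evalBinForm f (x * c) (y * c) = c ^ f.natDegree * evalBinForm f x y := by
  rw [evalBinForm, evalBinForm, mul_sum]
  refine sum_congr rfl fun i hi => ?_
  have hc : c ^ f.natDegree = c ^ i * c ^ (f.natDegree - i) := by
    rw [← pow_add, Nat.add_sub_cancel' (Nat.lt_succ_iff.1 (mem_range.1 hi))]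
  rw [hc]
  ring

theorem binForm_one_right (a : ℤ) : binForm f a 1 = f.eval a := by
  simp [binForm, eval_eq_sum_range]

end EvalBinForm

section PrimePower

variable (f : ℤ[X]) {p k : ℕ} [Fact p.Prime]

open scoped Classical

theorem nRoots_eq_card_zmod (hk : k ≠ 0) :
    nRoots f p k = #{r : ZMod (p ^ k) | evalBinForm f r 1 = 0} +
      #{s : ZMod (p ^ k) | ¬IsUnit s ∧ evalBinForm f 1 s = 0} := by
  -- The first set in `nRoots` is elaborated as the image of `range (p ^ k)` in `ℤ`.
  simp only [nRoots, bind_def, pure_def, sup_singleton_apply, filter_image,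
    card_image_of_injective _ Nat.cast_injective]
  congr 1 <;> refine card_filter_eq_card_filter_of_bijOn (i := Nat.cast)
    (by rw [coe_range, coe_univ]; exact ZMod.bijOn_natCast_Iio _) fun a _ => ?_
  · rw [← ZMod.intCast_zmod_pow_eq_zero_iff, ← binForm_one_right, Int.cast_binForm]
    push_cast
    rfl
  · rw [← ZMod.intCast_zmod_pow_eq_zero_iff, Int.cast_binForm,
      ZMod.isUnit_natCast_primePow_iff Fact.out hk, not_not]
    push_cast
    rfl

theorem card_coprime_pairs_eq_card_zmod (hk : k ≠ 0) :
    (((Icc 1 (p ^ k)) ×ˢ (Icc 1 (p ^ k))).filter fun ab : ℕ × ℕ =>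
        Nat.gcd (Nat.gcd ab.1 ab.2) p = 1 ∧ (p : ℤ) ^ k ∣ binForm f (ab.1 : ℤ) (ab.2 : ℤ)).card =
      #{xy : ZMod (p ^ k) × ZMod (p ^ k) |
        (IsUnit xy.1 ∨ IsUnit xy.2) ∧ evalBinForm f xy.1 xy.2 = 0} := by
  refine card_filter_eq_card_filter_of_bijOn (i := Prod.map Nat.cast Nat.cast) ?_ fun ab _ => ?_
  · rw [coe_product, coe_Icc, coe_univ, ← Set.univ_prod_univ]
    exact (ZMod.bijOn_natCast_Icc _).prodMap (ZMod.bijOn_natCast_Icc _)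
  · rw [Prod.map_fst, Prod.map_snd, Nat.gcd_gcd_prime_eq_one_iff Fact.out,
      ZMod.isUnit_natCast_primePow_iff Fact.out hk, ZMod.isUnit_natCast_primePow_iff Fact.out hk,
      ← ZMod.intCast_zmod_pow_eq_zero_iff, Int.cast_binForm]
    push_cast
    tauto

end PrimePower

open scoped Classical in
theorem card_pairs_eq_totient_mul_nRoots_general (f : Polynomial ℤ)
    (p : ℕ) (hp : p.Prime) (k : ℕ) (hk : 1 ≤ k) :
    (((Finset.Icc 1 (p ^ k)) ×ˢ (Finset.Icc 1 (p ^ k))).filter fun ab : ℕ × ℕ =>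
        Nat.gcd (Nat.gcd ab.1 ab.2) p = 1 ∧
        (p : ℤ) ^ k ∣ binForm f (ab.1 : ℤ) (ab.2 : ℤ)).card =
      Nat.totient (p ^ k) * nRoots f p k := by
  have : Fact p.Prime := ⟨hp⟩
  have hk0 : k ≠ 0 := Nat.one_le_iff_ne_zero.1 hk
  rw [card_coprime_pairs_eq_card_zmod f hk0,
    card_filter_zeros_of_homogeneous _ _ (evalBinForm_mul_mul f), nRoots_eq_card_zmod f hk0,
    ZMod.card_units_eq_totient]

open scoped Classical in
/-- for `f ∈ ℤ[X]` of degree `d ≥ 1`, every prime `p` and `k ≥ 1`,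
`#{(a,b) ∈ [1,p^k]² : gcd(a,b,p) = 1, p^k ∣ F(a,b)} = φ(p^k)·n_{p^k}(f)`. -/
theorem card_pairs_eq_totient_mul_nRoots (f : Polynomial ℤ) (hd : 1 ≤ f.natDegree)
    (p : ℕ) (hp : p.Prime) (k : ℕ) (hk : 1 ≤ k) :
    (((Finset.Icc 1 (p ^ k)) ×ˢ (Finset.Icc 1 (p ^ k))).filter fun ab : ℕ × ℕ =>
        Nat.gcd (Nat.gcd ab.1 ab.2) p = 1 ∧
        (p : ℤ) ^ k ∣ binForm f (ab.1 : ℤ) (ab.2 : ℤ)).card =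
      Nat.totient (p ^ k) * nRoots f p k :=
  card_pairs_eq_totient_mul_nRoots_general f p hp k hk
end

section
/- Let d ≥ 2 and let I_0,…,I_{d−1} be nonempty finite sets (intervals) of integers. Then the number of tuples (f_0,…,f_{d−1}) ∈ I_0×⋯×I_{d−1} such that the monic polynomial X^d + Σ_{i=0}^{d−1} f_i X^i has zero discriminant is at most d·∏_{i=1}^{d−1} #I_i. -/
/-- The monic integer polynomial `X^d + Σ_{i<d} c_i X^i`. -/
noncomputable def monicPoly (d : ℕ) (c : Fin d → ℤ) : Polynomial ℤ :=
  Polynomial.X ^ d + ∑ i : Fin d, Polynomial.C (c i) * Polynomial.X ^ (i : ℕ)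

open scoped Classical in
/-- The set `E^{(1)}(m,d,I)` of (coefficient tuples of) monic polynomials of degree `d` with
`i`-th coefficient in the interval `[lo i, hi i]` and nonzero discriminant. -/
noncomputable def Eset (d : ℕ) (lo hi : Fin d → ℤ) : Finset (Fin d → ℤ) :=
  (Fintype.piFinset fun j => Finset.Icc (lo j) (hi j)).filter
    fun c => disc (monicPoly d c) ≠ 0

/-!
Fix the coefficients `f₁, …, f_{d-1}` and let `p` be the monic polynomial with these coefficients
and constant term `0`. The polynomials of the fibre are the shifts `p + f₀`, and they all have the
same derivative `p'`, of degree `d - 1`. A monic polynomial with zero discriminant has vanishing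
resultant with its derivative, hence (over `ℂ`) a common root with it; so `p + f₀` has zero
discriminant only if `f₀ = -p(α)` for one of the at most `d - 1` roots `α` of `p'`.
-/

open Polynomial hiding resultant
open Finset Function

theorem sylvesterMatrix_eq_sylvester_transpose (f g : ℤ[X]) :
    sylvesterMatrix f g =
      (sylvester f g f.natDegree g.natDegree).transpose.submatrix Fin.rev Fin.rev := by
  ext i j
  simp only [sylvesterMatrix, Matrix.of_apply, Matrix.submatrix_apply, Matrix.transpose_apply,
    sylvester]
  rcases lt_or_ge (i : ℕ) g.natDegree with hi | hi
  · rw [if_pos hi, show Fin.rev i = Fin.natAdd f.natDegree ⟨g.natDegree - 1 - i, by omega⟩ from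
      Fin.ext (by simp; omega), Fin.addCases_right]
    simp only [Set.mem_Icc, Fin.val_rev]
    split_ifs <;> first | rfl | omega | (congr 1; omega)
  · rw [if_neg hi.not_gt, show Fin.rev i =
        Fin.castAdd g.natDegree ⟨f.natDegree + g.natDegree - 1 - i, by omega⟩ from
      Fin.ext (by simp; omega), Fin.addCases_left]
    simp only [Set.mem_Icc, Fin.val_rev]
    split_ifs <;> first | rfl | omega | (congr 1; omega)

theorem resultant_eq_polynomial_resultant (f g : ℤ[X]) :
    resultant f g = Polynomial.resultant f g := by
  rw [resultant, sylvesterMatrix_eq_sylvester_transpose]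
  exact (Matrix.det_submatrix_equiv_self Fin.revPerm _).trans (Matrix.det_transpose _)

theorem resultant_derivative_eq_zero_of_disc_eq_zero {f : ℤ[X]} (hf : f.Monic)
    (h : disc f = 0) : Polynomial.resultant f (derivative f) = 0 := by
  rw [disc, hf.leadingCoeff, Int.ediv_one, resultant_eq_polynomial_resultant] at h
  exact (mul_eq_zero.1 h).resolve_left (pow_ne_zero _ (by norm_num))

theorem exists_isRoot_isRoot_of_resultant_eq_zero {K : Type*} [Field K] [IsAlgClosed K]
    {f g : K[X]} (h : Polynomial.resultant f g = 0) : ∃ α, f.IsRoot α ∧ g.IsRoot α := by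
  have hnc := (resultant_eq_zero_iff.1 h).2
  rw [isCoprime_iff_aeval_ne_zero_of_isAlgClosed K K f g] at hnc
  push Not at hnc
  simpa using hnc

theorem exists_isRoot_map_of_disc_eq_zero {f : ℤ[X]} (hf : f.Monic) (h : disc f = 0) :
    ∃ α : ℂ, (f.map (Int.castRingHom ℂ)).IsRoot α ∧
      ((derivative f).map (Int.castRingHom ℂ)).IsRoot α := by
  have hinj : Injective (Int.castRingHom ℂ) := Int.cast_injective
  have hres : Polynomial.resultant (f.map (Int.castRingHom ℂ))
      ((derivative f).map (Int.castRingHom ℂ)) = 0 := by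
    rw [natDegree_map_eq_of_injective hinj, natDegree_map_eq_of_injective hinj, resultant_map_map,
      resultant_derivative_eq_zero_of_disc_eq_zero hf h, map_zero]
  exact exists_isRoot_isRoot_of_resultant_eq_zero hres

theorem card_le_natDegree_of_forall_exists_isRoot {K : Type*} [CommRing K] [IsDomain K]
    [DecidableEq K] {p g : K[X]} (hg : g ≠ 0) {s : Finset K}
    (hs : ∀ x ∈ s, ∃ α, g.IsRoot α ∧ (p + C x).IsRoot α) : #s ≤ g.natDegree := by
  have hsub : s ⊆ g.roots.toFinset.image fun α => -p.eval α := by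
    intro x hx
    obtain ⟨α, hgα, hpα⟩ := hs x hx
    refine mem_image.2 ⟨α, Multiset.mem_toFinset.2 ((mem_roots hg).2 hgα), ?_⟩
    rw [IsRoot, eval_add, eval_C] at hpα
    linear_combination -hpα
  calc #s ≤ #(g.roots.toFinset.image fun α => -p.eval α) := card_le_card hsub
    _ ≤ #g.roots.toFinset := card_image_le
    _ ≤ Multiset.card g.roots := Multiset.toFinset_card_le _
    _ ≤ g.natDegree := card_roots' g

theorem card_filter_disc_add_C_eq_zero_le {p : ℤ[X]} (hp : p.Monic) (hdeg : p.natDegree ≠ 0)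
    (s : Finset ℤ) : #{x ∈ s | disc (p + C x) = 0} ≤ p.natDegree - 1 := by
  have hinj : Injective (Int.castRingHom ℂ) := Int.cast_injective
  set g := (derivative p).map (Int.castRingHom ℂ)
  have hg : g ≠ 0 := by
    rwa [Ne, Polynomial.map_eq_zero_iff hinj, derivative_eq_zero]
  have hcard := card_le_natDegree_of_forall_exists_isRoot (p := p.map (Int.castRingHom ℂ)) hg
    (s := {x ∈ s | disc (p + C x) = 0}.image (Int.castRingHom ℂ)) ?_
  · rw [card_image_of_injective _ hinj, natDegree_map_eq_of_injective hinj] at hcard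
    exact hcard.trans (natDegree_derivative_le p)
  simp only [mem_image, mem_filter]
  rintro _ ⟨x, ⟨-, hx⟩, rfl⟩
  have hmonic : (p + C x).Monic := hp.add_of_left <|
    degree_C_le.trans_lt (natDegree_pos_iff_degree_pos.1 (Nat.pos_of_ne_zero hdeg))
  obtain ⟨α, hroot, hroot'⟩ := exists_isRoot_map_of_disc_eq_zero hmonic hx
  rw [derivative_add, derivative_C, add_zero] at hroot'
  rw [Polynomial.map_add, map_C] at hroot
  exact ⟨α, hroot', hroot⟩

theorem degree_sum_C_mul_X_pow_lt (d : ℕ) (c : Fin d → ℤ) :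
    (∑ i : Fin d, C (c i) * X ^ (i : ℕ)).degree < (d : WithBot ℕ) := by
  refine (degree_sum_le _ _).trans_lt ((Finset.sup_lt_iff (WithBot.bot_lt_coe d)).2 fun i _ => ?_)
  exact (degree_C_mul_X_pow_le _ _).trans_lt (Nat.cast_lt.2 i.isLt)

theorem monicPoly_monic (d : ℕ) (c : Fin d → ℤ) : (monicPoly d c).Monic :=
  monic_X_pow_add (degree_sum_C_mul_X_pow_lt d c)

theorem natDegree_monicPoly (d : ℕ) (c : Fin d → ℤ) : (monicPoly d c).natDegree = d := by
  rw [monicPoly, natDegree_add_eq_left_of_degree_lt, natDegree_X_pow]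
  rw [degree_X_pow]
  exact degree_sum_C_mul_X_pow_lt d c

theorem monicPoly_update (d : ℕ) (c : Fin d → ℤ) (i : Fin d) (x : ℤ) :
    monicPoly d (update c i x) = monicPoly d c + C (x - c i) * X ^ (i : ℕ) := by
  have hterm : ∀ j, C (update c i x j) * X ^ (j : ℕ) =
      C (c j) * X ^ (j : ℕ) + if j = i then C (x - c i) * X ^ (i : ℕ) else 0 := by
    intro j
    rcases eq_or_ne j i with rfl | hj
    · simp only [update_self, if_true, map_sub]; ring
    · simp [hj]
  simp only [monicPoly, hterm, sum_add_distrib, sum_ite_eq', mem_univ, if_true, add_assoc]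

theorem card_filter_piFinset_le_mul_prod_erase {ι α : Type*} [Fintype ι] [DecidableEq ι]
    [DecidableEq α] (I : ι → Finset α) (i₀ : ι) (P : (ι → α) → Prop) [DecidablePred P] (k : ℕ)
    (hk : ∀ b : ι → α, #{x ∈ I i₀ | P (update b i₀ x)} ≤ k) :
    #{c ∈ Fintype.piFinset I | P c} ≤ k * ∏ j ∈ univ.erase i₀, #(I j) := by
  rcases eq_empty_or_nonempty {c ∈ Fintype.piFinset I | P c} with h | ⟨c₀, -⟩
  · simp [h]
  set a := c₀ i₀
  have hrebuild : ∀ c : ι → α, c = update (update c i₀ a) i₀ (c i₀) := by simp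
  have hmaps : ∀ c ∈ {c ∈ Fintype.piFinset I | P c},
      update c i₀ a ∈ Fintype.piFinset (update I i₀ {a}) := by
    intro c hc
    rw [mem_filter, Fintype.mem_piFinset] at hc
    rw [Fintype.mem_piFinset]
    intro j
    rcases eq_or_ne j i₀ with rfl | hj
    · simp
    · simpa [update_of_ne hj] using hc.1 j
  refine (card_le_mul_card_image_of_maps_to hmaps k fun b _ => ?_).trans ?_
  · refine (card_le_card_of_injOn (fun c => c i₀) ?_ ?_).trans (hk b)
    · intro c hc
      simp only [mem_filter, Fintype.mem_piFinset, mem_coe] at hc ⊢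
      obtain ⟨⟨hcI, hP⟩, rfl⟩ := hc
      exact ⟨hcI i₀, by rwa [← hrebuild]⟩
    · intro c₁ hc₁ c₂ hc₂ h
      simp only [mem_filter, mem_coe] at hc₁ hc₂ h
      rw [hrebuild c₁, hrebuild c₂, hc₁.2, hc₂.2, h]
  · rw [Fintype.card_piFinset, ← prod_erase_mul _ _ (mem_univ i₀), update_self, card_singleton,
      mul_one]
    refine Nat.mul_le_mul_left k (prod_congr rfl fun j hj => ?_).le
    rw [update_of_ne (ne_of_mem_erase hj)]

open scoped Classical in
/-- for `d ≥ 2` and nonempty finite sets `I_0,…,I_{d−1} ⊆ ℤ`, the number of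
tuples `(f_0,…,f_{d−1}) ∈ I_0×⋯×I_{d−1}` for which `X^d + Σ f_i X^i` has zero discriminant is
at most `d·∏_{i=1}^{d−1} #I_i`. -/
theorem card_zero_disc_le (d : ℕ) (hd : 2 ≤ d) (I : Fin d → Finset ℤ) :
    ((Fintype.piFinset I).filter fun c => disc (monicPoly d c) = 0).card ≤
      d * ∏ j ∈ Finset.univ.erase (⟨0, by omega⟩ : Fin d), (I j).card := by
  set z : Fin d := ⟨0, by omega⟩
  refine card_filter_piFinset_le_mul_prod_erase I z _ d fun b => ?_
  set p := monicPoly d (update b z 0)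
  have hshift : ∀ x, monicPoly d (update b z x) = p + C x := fun x => by
    simpa [p, z] using monicPoly_update d (update b z 0) z x
  have hdeg : p.natDegree = d := natDegree_monicPoly d _
  calc #{x ∈ I z | disc (monicPoly d (update b z x)) = 0}
      = #{x ∈ I z | disc (p + C x) = 0} := by simp only [hshift]
    _ ≤ p.natDegree - 1 := card_filter_disc_add_C_eq_zero_le (monicPoly_monic d _)
      (by omega : p.natDegree ≠ 0) _
    _ ≤ d := by omega
end

section
/- Let g = aX + b ∈ ℤ[X] with a ≠ 0 and gcd(a,b) = 1. Then n_{p^k}(g) = 1 for every prime p and every k ≥ 1, hence α_p(g) = (log p)/(p²−1) for every prime p, the series Σ_p α_p(g) converges, and α(g) := Σ_p α_p(g) = Σ_p (log p)/(p²−1) = −ζ'(2)/ζ(2), where ζ is the Riemann zeta function. -/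
open Polynomial Finset ArithmeticFunction

lemma card_filter_range_dvd_mul_add {n : ℕ} [NeZero n] {c : ℤ} (hc : IsCoprime (n : ℤ) c)
    (d : ℤ) : #((range n).filter fun x : ℕ ↦ (n : ℤ) ∣ c * x + d) = 1 := by
  obtain ⟨u, hu⟩ := (ZMod.coe_int_isUnit_iff_isCoprime c n).mpr hc
  rw [card_eq_one]
  refine ⟨(-(d : ZMod n) * ↑u⁻¹).val, ?_⟩
  ext x
  simp only [mem_filter, mem_range, mem_singleton, ← ZMod.intCast_zmod_eq_zero_iff_dvd]
  push_cast
  rw [← hu, ← eq_neg_iff_add_eq_zero, mul_comm, ← Units.eq_mul_inv_iff_mul_eq]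
  constructor
  · rintro ⟨hx, h⟩
    rw [← h, ZMod.val_cast_of_lt hx]
  · rintro rfl
    exact ⟨ZMod.val_lt _, ZMod.natCast_zmod_val _⟩

lemma nRoots_eq_card_add_card (f : ℤ[X]) (p k : ℕ) : nRoots f p k =
    #((range (p ^ k)).filter fun x : ℕ ↦ (p : ℤ) ^ k ∣ f.eval (x : ℤ)) +
      #((range (p ^ k)).filter fun x : ℕ ↦ p ∣ x ∧ (p : ℤ) ^ k ∣ binForm f 1 x) := by
  simp only [nRoots, bind_pure_comp, fmap_def, filter_image,
    card_image_of_injective _ Nat.cast_injective]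

lemma binForm_linear {a : ℤ} (ha : a ≠ 0) (b y : ℤ) : binForm (C a * X + C b) 1 y = b * y + a := by
  rw [binForm, natDegree_linear ha]
  simp only [sum_range_succ, range_zero, sum_empty, coeff_add, coeff_C_mul, coeff_X_zero,
    coeff_X_one, coeff_C_zero, coeff_C_succ]
  ring

theorem nRoots_linear {a b : ℤ} (ha : a ≠ 0) (hab : IsCoprime a b) {p : ℕ} (hp : p.Prime)
    {k : ℕ} (hk : k ≠ 0) : nRoots (C a * X + C b) p k = 1 := by
  have hp' : Prime (p : ℤ) := Nat.prime_iff_prime_int.mp hp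
  have : NeZero (p ^ k) := ⟨pow_ne_zero k hp.ne_zero⟩
  have no_root {c d : ℤ} (hc : (p : ℤ) ∣ c) (hd : ¬ (p : ℤ) ∣ d) : ¬ (p : ℤ) ^ k ∣ c + d :=
    fun h ↦ hd ((dvd_add_right hc).mp ((dvd_pow_self _ hk).trans h))
  have one_root {c : ℤ} (hc : ¬ (p : ℤ) ∣ c) (d : ℤ) :
      #((range (p ^ k)).filter fun x : ℕ ↦ (p : ℤ) ^ k ∣ c * x + d) = 1 := by
    simpa using card_filter_range_dvd_mul_add (n := p ^ k)
      (by simpa using (hp'.coprime_iff_not_dvd.mpr hc).pow_left) d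
  rw [nRoots_eq_card_add_card]
  simp only [eval_add, eval_mul, eval_C, eval_X, binForm_linear ha]
  by_cases hpa : (p : ℤ) ∣ a
  · have hpb : ¬ (p : ℤ) ∣ b := fun hpb ↦ hp'.not_isUnit (hab.isUnit_of_dvd' hpa hpb)
    rw [filter_false_of_mem fun (x : ℕ) _ ↦ no_root (hpa.mul_right x) hpb, card_empty, zero_add,
      ← one_root hpb a]
    congr 1
    refine filter_congr fun x _ ↦ and_iff_right_of_imp fun h ↦ ?_
    have hpbx : (p : ℤ) ∣ b * x := (dvd_add_left hpa).mp ((dvd_pow_self _ hk).trans h)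
    exact Int.natCast_dvd_natCast.mp ((hp'.dvd_or_dvd hpbx).resolve_left hpb)
  · rw [one_root hpa, filter_false_of_mem fun x _ h ↦
      no_root ((Int.natCast_dvd_natCast.mpr h.1).mul_left b) hpa h.2, card_empty]

lemma tsum_inv_pow_succ {x : ℝ} (hx : 1 < x) : ∑' k : ℕ, x⁻¹ ^ (k + 1) = (x - 1)⁻¹ := by
  have hx₀ : 0 < x := one_pos.trans hx
  simp_rw [pow_succ]
  rw [tsum_mul_right, tsum_geometric_of_lt_one (inv_nonneg.mpr hx₀.le) (inv_lt_one_of_one_lt₀ hx)]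
  field_simp

lemma alphaP_eq_of_nRoots_eq_one {f : ℤ[X]} {p : ℕ} (hp : 1 < p)
    (hf : ∀ k : ℕ, nRoots f p (k + 1) = 1) : alphaP f p = Real.log p / ((p : ℝ) ^ 2 - 1) := by
  have hp' : (1 : ℝ) < p := by exact_mod_cast hp
  have hsum : ∑' k : ℕ, (nRoots f p (k + 1) : ℝ) / (p : ℝ) ^ (k + 1) = ((p : ℝ) - 1)⁻¹ := by
    simp_rw [hf, Nat.cast_one, one_div, ← inv_pow]
    exact tsum_inv_pow_succ hp'
  rw [alphaP, hsum]
  have : (p : ℝ) - 1 ≠ 0 := sub_ne_zero.mpr hp'.ne'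
  rw [show (p : ℝ) ^ 2 - 1 = (p - 1) * (p + 1) by ring]
  field_simp
  ring

lemma summable_vonMangoldt_div_pow {s : ℕ} (hs : 1 < s) :
    Summable fun n : ℕ ↦ Λ n / (n : ℝ) ^ s := by
  refine (LSeriesSummable_vonMangoldt (s := s) (by simpa using hs)).norm.congr fun n ↦ ?_
  rcases eq_or_ne n 0 with rfl | hn
  · simp [LSeries.term]
  · rw [LSeries.term_of_ne_zero hn, Complex.cpow_natCast, norm_div, norm_pow, Complex.norm_real,
      Complex.norm_natCast, Real.norm_of_nonneg vonMangoldt_nonneg]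

lemma tsum_vonMangoldt_prime_pow_div_pow (p : Nat.Primes) {s : ℕ} (hs : s ≠ 0) :
    ∑' k : ℕ, Λ ((p : ℕ) ^ (k + 1)) / (((p : ℕ) ^ (k + 1) : ℕ) : ℝ) ^ s =
      Real.log p / ((p : ℝ) ^ s - 1) := by
  have hps : 1 < ((p : ℕ) : ℝ) ^ s := one_lt_pow₀ (by exact_mod_cast p.prop.one_lt) hs
  have hterm (k : ℕ) : Λ ((p : ℕ) ^ (k + 1)) / (((p : ℕ) ^ (k + 1) : ℕ) : ℝ) ^ s =
      Real.log p * (((p : ℝ) ^ s)⁻¹) ^ (k + 1) := by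
    rw [vonMangoldt_apply_pow k.succ_ne_zero, vonMangoldt_apply_prime p.prop, Nat.cast_pow,
      ← pow_mul, mul_comm, pow_mul, div_eq_mul_inv, inv_pow]
  rw [tsum_congr hterm, tsum_mul_left, tsum_inv_pow_succ hps, div_eq_mul_inv]

lemma hasSum_log_div_pow_sub_one {s : ℕ} (hs : 1 < s) :
    HasSum (fun p : Nat.Primes ↦ Real.log p / ((p : ℝ) ^ s - 1)) (∑' n : ℕ, Λ n / (n : ℝ) ^ s) := by
  have hΛ := summable_vonMangoldt_div_pow hs
  have hsupp : Function.support (fun n : ℕ ↦ Λ n / (n : ℝ) ^ s) ⊆ {n | IsPrimePow n} :=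
    fun n hn ↦ vonMangoldt_ne_zero_iff.mp (left_ne_zero_of_mul hn)
  have hs₀ : s ≠ 0 := by omega
  have hsummable : Summable fun p : Nat.Primes ↦ Real.log p / ((p : ℝ) ^ s - 1) := by
    refine ((hΛ.comp_injective
      (Subtype.val_injective.comp Nat.Primes.prodNatEquiv.injective)).prod).congr fun p ↦ ?_
    simp only [Function.comp_apply, Nat.Primes.prodNatEquiv_apply]
    exact tsum_vonMangoldt_prime_pow_div_pow p hs₀
  rw [tsum_eq_tsum_primes_of_support_subset_prime_powers hΛ hsupp]
  simp_rw [tsum_vonMangoldt_prime_pow_div_pow _ hs₀]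
  exact hsummable.hasSum

lemma ofReal_tsum_vonMangoldt_div_pow {s : ℕ} (hs : 1 < s) :
    ((∑' n : ℕ, Λ n / (n : ℝ) ^ s : ℝ) : ℂ) = -deriv riemannZeta s / riemannZeta s := by
  rw [← LSeries_vonMangoldt_eq_deriv_riemannZeta_div (by simpa using hs), Complex.ofReal_tsum]
  refine tsum_congr fun n ↦ ?_
  rcases eq_or_ne n 0 with rfl | hn
  · simp [LSeries.term]
  · simp [LSeries.term_of_ne_zero hn]

/-- for `g = aX + b` with `a ≠ 0` and `gcd(a,b) = 1`, one has
`n_{p^k}(g) = 1` for all primes `p` and `k ≥ 1`, hence `α_p(g) = (log p)/(p²−1)`,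
the series `α(g) = Σ_p α_p(g)` converges, and
`α(g) = Σ_p (log p)/(p²−1) = −ζ'(2)/ζ(2)`. -/
theorem alpha_linear (a b : ℤ) (ha : a ≠ 0) (hab : IsCoprime a b) :
    (∀ p : ℕ, p.Prime → ∀ k : ℕ, 1 ≤ k →
      nRoots (Polynomial.C a * Polynomial.X + Polynomial.C b) p k = 1) ∧
    (∀ p : ℕ, p.Prime →
      alphaP (Polynomial.C a * Polynomial.X + Polynomial.C b) p =
        Real.log p / ((p : ℝ) ^ 2 - 1)) ∧
    Summable (fun p : Nat.Primes =>
      alphaP (Polynomial.C a * Polynomial.X + Polynomial.C b) (p : ℕ)) ∧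
    (∑' p : Nat.Primes, alphaP (Polynomial.C a * Polynomial.X + Polynomial.C b) (p : ℕ)) =
      (∑' p : Nat.Primes, Real.log (p : ℕ) / (((p : ℕ) : ℝ) ^ 2 - 1)) ∧
    ((∑' p : Nat.Primes,
        alphaP (Polynomial.C a * Polynomial.X + Polynomial.C b) (p : ℕ) : ℝ) : ℂ) =
      - deriv riemannZeta 2 / riemannZeta 2 := by
  have hroots : ∀ p : ℕ, p.Prime → ∀ k : ℕ, 1 ≤ k → nRoots (C a * X + C b) p k = 1 :=
    fun p hp k hk ↦ nRoots_linear ha hab hp (by omega)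
  have halpha : ∀ p : ℕ, p.Prime → alphaP (C a * X + C b) p = Real.log p / ((p : ℝ) ^ 2 - 1) :=
    fun p hp ↦ alphaP_eq_of_nRoots_eq_one hp.one_lt fun k ↦ hroots p hp (k + 1) k.succ_pos
  have hfun : (fun p : Nat.Primes ↦ alphaP (C a * X + C b) p) =
      fun p : Nat.Primes ↦ Real.log p / ((p : ℝ) ^ 2 - 1) :=
    funext fun p ↦ halpha p p.prop
  have hsum := hasSum_log_div_pow_sub_one one_lt_two
  rw [hfun, hsum.tsum_eq, ofReal_tsum_vonMangoldt_div_pow one_lt_two]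
  exact ⟨hroots, halpha, hsum.summable, rfl, by norm_num⟩
end

section
/- Let K be a number field of degree n over ℚ. For every complex s with Re(s) > 1, the series Σ_{I primitive} N(I)^{−s} over primitive nonzero ideals I of O_K converges absolutely and satisfies Σ_{I primitive} N(I)^{−s} = ( Σ_{I} N(I)^{−s} ) / ζ(ns), where the sum on the right is over all nonzero ideals of O_K and ζ is the Riemann zeta function. -/
open scoped NumberField

/-- An ideal of the ring of integers is primitive if it is nonzero and not divisible by
`pO_K` for any rational prime `p`. -/
def IsPrimitiveIdeal {K : Type*} [Field K] [NumberField K] (I : Ideal (𝓞 K)) : Prop :=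
  I ≠ ⊥ ∧ ∀ p : ℕ, p.Prime → ¬ (Ideal.span {(p : 𝓞 K)} ∣ I)

/-!
Every nonzero ideal `I` of `𝓞 K` factors uniquely as `(m) J` with `m ≥ 1` and `J` primitive:
`m` is the largest integer with `(m) ∣ I`, and uniqueness holds because `(k) ∣ (m) J` forces
`k ∣ m` when `J` is primitive. Since `N((m) J) = m ^ n N(J)`, the Dirichlet series over all
nonzero ideals is the product of `∑ m ^ (-n s) = ζ(n s)` with the series over primitive ideals.
Absolute convergence for `Re s > 1` comes from the linear growth of the number of ideals of
norm at most `x`.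
-/

open Ideal NumberField

section natCast

variable {R : Type*} [CommSemiring R]

lemma span_natCast_mul (a b : ℕ) :
    span {((a * b : ℕ) : R)} = span {(a : R)} * span {(b : R)} := by
  rw [span_singleton_mul_span_singleton, Nat.cast_mul]

lemma span_natCast_dvd_span_natCast {a b : ℕ} (h : a ∣ b) :
    span {(a : R)} ∣ span {(b : R)} := by
  obtain ⟨c, rfl⟩ := h
  rw [span_natCast_mul]
  exact dvd_mul_right _ _

lemma span_natCast_ne_bot [CharZero R] {m : ℕ} (hm : m ≠ 0) : span {(m : R)} ≠ ⊥ := by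
  rwa [Ne, span_singleton_eq_bot, Nat.cast_eq_zero]

end natCast

section

variable {K : Type*} [Field K] [NumberField K]

lemma absNorm_span_natCast_eq_pow_finrank (m : ℕ) :
    absNorm (span {(m : 𝓞 K)}) = m ^ Module.finrank ℚ K := by
  rw [absNorm_span_natCast, RingOfIntegers.rank]

lemma span_natCast_injective : Function.Injective fun m : ℕ ↦ span {(m : 𝓞 K)} := by
  intro m m' h
  have := congrArg absNorm h
  simp only [absNorm_span_natCast_eq_pow_finrank] at this
  exact Nat.pow_left_injective Module.finrank_pos.ne' this

lemma le_absNorm_of_span_natCast_dvd {I : Ideal (𝓞 K)} (hI : I ≠ ⊥) {m : ℕ}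
    (hm : span {(m : 𝓞 K)} ∣ I) : m ≤ absNorm I := by
  have hdvd : m ^ Module.finrank ℚ K ∣ absNorm I := by
    rw [← absNorm_span_natCast_eq_pow_finrank]
    exact map_dvd absNorm hm
  exact (Nat.le_self_pow Module.finrank_pos.ne' m).trans
    (Nat.le_of_dvd (Nat.pos_of_ne_zero (absNorm_eq_zero_iff.not.mpr hI)) hdvd)

namespace IsPrimitiveIdeal

lemma eq_one_of_span_natCast_dvd {J : Ideal (𝓞 K)} (hJ : IsPrimitiveIdeal J) {k : ℕ}
    (hk : span {(k : 𝓞 K)} ∣ J) : k = 1 := by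
  by_contra hk1
  exact hJ.2 k.minFac (Nat.minFac_prime hk1)
    ((span_natCast_dvd_span_natCast k.minFac_dvd).trans hk)

/-- Cancelling the common factor `gcd k m` leaves coprime `k'`, `m'` with `(k') ∣ (m') J`;
coprimality moves `(k')` onto `J`, and primitivity forces `k' = 1`. -/
lemma dvd_of_span_natCast_dvd_span_mul {J : Ideal (𝓞 K)} (hJ : IsPrimitiveIdeal J) {k m : ℕ}
    (hm : m ≠ 0) (h : span {(k : 𝓞 K)} ∣ span {(m : 𝓞 K)} * J) : k ∣ m := by
  obtain ⟨g, k', m', hg, hcop, rfl, rfl⟩ :=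
    Nat.exists_coprime' (Nat.gcd_pos_of_pos_right k (Nat.pos_of_ne_zero hm))
  rw [mul_comm k', mul_comm m', span_natCast_mul, span_natCast_mul, mul_assoc] at h
  have h' := (mul_dvd_mul_iff_left (span_natCast_ne_bot (R := 𝓞 K) hg.ne')).mp h
  have hcop' : IsCoprime (span {(k' : 𝓞 K)}) (span {(m' : 𝓞 K)}) := by
    rw [isCoprime_span_singleton_iff]
    simpa using (Nat.isCoprime_iff_coprime.mpr hcop).map (algebraMap ℤ (𝓞 K))
  rw [hJ.eq_one_of_span_natCast_dvd (hcop'.dvd_of_dvd_mul_left h'), one_mul]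
  exact dvd_mul_left g m'

end IsPrimitiveIdeal

lemma exists_span_natCast_mul_primitive_eq {I : Ideal (𝓞 K)} (hI : I ≠ ⊥) :
    ∃ (m : ℕ+) (J : Ideal (𝓞 K)), IsPrimitiveIdeal J ∧ span {((m : ℕ) : 𝓞 K)} * J = I := by
  classical
  let P : ℕ → Prop := fun k ↦ span {(k : 𝓞 K)} ∣ I
  have hP1 : P 1 := by simp [P]
  have hpos : 1 ≤ absNorm I := Nat.pos_of_ne_zero (absNorm_eq_zero_iff.not.mpr hI)
  set m := Nat.findGreatest P (absNorm I)
  have hm : 1 ≤ m := Nat.le_findGreatest hpos hP1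
  obtain ⟨J, hJ⟩ : P m := Nat.findGreatest_spec hpos hP1
  have hJ0 : J ≠ ⊥ := by
    rintro rfl
    exact hI (by rw [hJ, mul_bot])
  refine ⟨⟨m, hm⟩, J, ⟨hJ0, fun p hp hpJ ↦ ?_⟩, hJ.symm⟩
  have hpm : P (p * m) := by
    change span _ ∣ I
    rw [hJ, mul_comm p, span_natCast_mul]
    exact mul_dvd_mul_left _ hpJ
  exact Nat.findGreatest_is_greatest (by nlinarith [hp.two_le])
    (le_absNorm_of_span_natCast_dvd hI hpm) hpm

lemma span_natCast_mul_primitive_injective :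
    Function.Injective fun x : ℕ+ × {J : Ideal (𝓞 K) // IsPrimitiveIdeal J} ↦
      span {((x.1 : ℕ) : 𝓞 K)} * x.2.1 := by
  rintro ⟨m, J, hJ⟩ ⟨m', J', hJ'⟩
    (h : span {((m : ℕ) : 𝓞 K)} * J = span {((m' : ℕ) : 𝓞 K)} * J')
  have hmm' : (m : ℕ) ∣ m' :=
    hJ'.dvd_of_span_natCast_dvd_span_mul m'.ne_zero (h ▸ dvd_mul_right _ _)
  have hm'm : (m' : ℕ) ∣ m :=
    hJ.dvd_of_span_natCast_dvd_span_mul m.ne_zero (h ▸ dvd_mul_right _ _)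
  obtain rfl : m = m' := PNat.coe_injective (Nat.dvd_antisymm hmm' hm'm)
  obtain rfl : J = J' := mul_left_cancel₀ (span_natCast_ne_bot m.ne_zero) h
  rfl

noncomputable def spanNatCastMulPrimitiveEquiv :
    ℕ+ × {J : Ideal (𝓞 K) // IsPrimitiveIdeal J} ≃ {I : Ideal (𝓞 K) // I ≠ ⊥} :=
  Equiv.ofBijective
    (fun x ↦ ⟨span {((x.1 : ℕ) : 𝓞 K)} * x.2.1,
      mul_ne_zero (span_natCast_ne_bot x.1.ne_zero) x.2.2.1⟩)
    ⟨fun _ _ h ↦ span_natCast_mul_primitive_injective (congrArg Subtype.val h), fun ⟨_, hI⟩ ↦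
      let ⟨m, J, hJ, hmJ⟩ := exists_span_natCast_mul_primitive_eq hI
      ⟨(m, ⟨J, hJ⟩), Subtype.ext hmJ⟩⟩

lemma spanNatCastMulPrimitiveEquiv_apply_coe
    (x : ℕ+ × {J : Ideal (𝓞 K) // IsPrimitiveIdeal J}) :
    (spanNatCastMulPrimitiveEquiv x : Ideal (𝓞 K)) = span {((x.1 : ℕ) : 𝓞 K)} * x.2.1 :=
  rfl

variable (K) in
lemma sum_card_absNorm_eq_le_card_absNorm_le (n : ℕ) :
    ∑ k ∈ Finset.Icc 1 n, Nat.card {I : Ideal (𝓞 K) // absNorm I = k} ≤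
      Nat.card {I : Ideal (𝓞 K) // absNorm I ≤ n} := by
  rw [← Finset.card_preimage_eq_sum_card_image_eq (fun k _ ↦ finite_setOfPred_absNorm_eq k)]
  exact Nat.card_mono (finite_setOfPred_absNorm_le n) fun I hI ↦
    (Finset.mem_Icc.mp (Set.mem_preimage.mp hI)).2

open Asymptotics Filter in
variable (K) in
lemma LSeriesSummable_card_absNorm_eq {s : ℂ} (hs : 1 < s.re) :
    LSeriesSummable (fun n ↦ (Nat.card {I : Ideal (𝓞 K) // absNorm I = n} : ℂ)) s := by
  refine LSeriesSummable_of_sum_norm_bigO_and_nonneg (r := 1) ?_ (fun _ ↦ by positivity)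
    zero_le_one hs
  have hle :
      (fun n : ℕ ↦ ∑ k ∈ Finset.Icc 1 n, (Nat.card {I : Ideal (𝓞 K) // absNorm I = k} : ℝ))
        =O[atTop] fun n ↦ (Nat.card {I : Ideal (𝓞 K) // absNorm I ≤ n} : ℝ) :=
    isBigO_of_le _ fun n ↦ by
      simp only [Real.norm_natCast, ← Nat.cast_sum]
      exact_mod_cast sum_card_absNorm_eq_le_card_absNorm_le K n
  refine hle.trans (isBigO_atTop_natCast_rpow_of_tendsto_div_rpow
    (((NumberField.Ideal.tendsto_norm_le_div_atTop K).comp tendsto_natCast_atTop_atTop).congr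
      fun n ↦ ?_))
  simp [Real.rpow_one]

lemma summable_norm_absNorm_cpow_neg {s : ℂ} (hs : 1 < s.re) :
    Summable fun I : Ideal (𝓞 K) ↦ ‖(absNorm I : ℂ) ^ (-s)‖ := by
  have hre : (-s).re = -s.re := Complex.neg_re s
  simp_rw [Complex.norm_natCast_cpow_of_re_ne_zero _ (by linarith : (-s).re ≠ 0), hre]
  rw [← (Equiv.sigmaFiberEquiv (absNorm : Ideal (𝓞 K) → ℕ)).summable_iff]
  refine (summable_sigma_of_nonneg fun _ ↦ Real.rpow_nonneg (Nat.cast_nonneg _) _).mpr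
    ⟨fun n ↦ ?_, (LSeriesSummable_card_absNorm_eq K hs).norm.congr fun n ↦ ?_⟩
  · have : Finite {I : Ideal (𝓞 K) // absNorm I = n} :=
      (finite_setOfPred_absNorm_eq n).to_subtype
    exact Summable.of_finite
  have hfiber : ∑' I : {I : Ideal (𝓞 K) // absNorm I = n},
      ((absNorm (Equiv.sigmaFiberEquiv absNorm ⟨n, I⟩) : ℕ) : ℝ) ^ (-s.re) =
      Nat.card {I : Ideal (𝓞 K) // absNorm I = n} * (n : ℝ) ^ (-s.re) := by
    simp_rw [Equiv.sigmaFiberEquiv_apply]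
    rw [tsum_congr fun I ↦ by rw [I.2], tsum_const, nsmul_eq_mul]
  rw [hfiber, LSeries.norm_term_eq]
  rcases eq_or_ne n 0 with rfl | hn
  · simp [Real.zero_rpow (by linarith : -s.re ≠ 0)]
  · rw [if_neg hn, Complex.norm_natCast, Real.rpow_neg (Nat.cast_nonneg n), div_eq_mul_inv]

lemma tsum_pnat_pow_cpow_neg_eq_riemannZeta (d : ℕ) {s : ℂ} (hs : 1 < (d * s).re) :
    ∑' m : ℕ+, (((m : ℕ) ^ d : ℕ) : ℂ) ^ (-s) = riemannZeta (d * s) := by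
  have hds : (d : ℂ) * s ≠ 0 := fun h ↦ by norm_num [h] at hs
  rw [zeta_eq_tsum_one_div_nat_cpow hs,
    ← tsum_pnat_eq_tsum_of_eq_zero (by simp [Complex.zero_cpow hds])]
  refine tsum_congr fun m ↦ ?_
  rw [Nat.cast_pow, ← Complex.natCast_cpow_natCast_mul, mul_neg, Complex.cpow_neg, one_div]

lemma one_lt_re_natCast_mul {d : ℕ} (hd : d ≠ 0) {s : ℂ} (hs : 1 < s.re) : 1 < (d * s).re := by
  have : (1 : ℝ) ≤ d := by exact_mod_cast Nat.one_le_iff_ne_zero.mpr hd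
  rw [Complex.mul_re, Complex.natCast_re, Complex.natCast_im, zero_mul, sub_zero]
  nlinarith

lemma tsum_absNorm_span_natCast_cpow_neg {s : ℂ} (hs : 1 < s.re) :
    ∑' m : ℕ+, (absNorm (span {((m : ℕ) : 𝓞 K)}) : ℂ) ^ (-s) =
      riemannZeta (Module.finrank ℚ K * s) := by
  simp_rw [absNorm_span_natCast_eq_pow_finrank]
  exact tsum_pnat_pow_cpow_neg_eq_riemannZeta _ (one_lt_re_natCast_mul Module.finrank_pos.ne' hs)

lemma tsum_absNorm_cpow_neg_eq_mul {s : ℂ} (hs : 1 < s.re) :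
    ∑' I : {I : Ideal (𝓞 K) // I ≠ ⊥}, (absNorm I.1 : ℂ) ^ (-s) =
      (∑' m : ℕ+, (absNorm (span {((m : ℕ) : 𝓞 K)}) : ℂ) ^ (-s)) *
        ∑' J : {J : Ideal (𝓞 K) // IsPrimitiveIdeal J}, (absNorm J.1 : ℂ) ^ (-s) := by
  have hsum := summable_norm_absNorm_cpow_neg (K := K) hs
  rw [← spanNatCastMulPrimitiveEquiv.tsum_eq, tsum_mul_tsum_of_summable_norm
    (f := fun m : ℕ+ ↦ (absNorm (span {((m : ℕ) : 𝓞 K)}) : ℂ) ^ (-s))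
    (hsum.comp_injective (span_natCast_injective.comp PNat.coe_injective))
    (hsum.comp_injective Subtype.val_injective)]
  refine tsum_congr fun x ↦ ?_
  rw [spanNatCastMulPrimitiveEquiv_apply_coe, map_mul, Nat.cast_mul,
    Complex.natCast_mul_natCast_cpow]

end

/-- for a number field `K` of degree `n` and `Re(s) > 1`, the Dirichlet
series over primitive ideals converges absolutely and equals the Dirichlet series over all
nonzero ideals divided by `ζ(ns)`. -/
theorem primitive_ideal_dirichlet_series (K : Type*) [Field K] [NumberField K]
    (n : ℕ) (hn : n = Module.finrank ℚ K) (s : ℂ) (hs : 1 < s.re) :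
    Summable (fun I : {I : Ideal (𝓞 K) // IsPrimitiveIdeal I} =>
      ‖(Ideal.absNorm I.1 : ℂ) ^ (-s)‖) ∧
    (∑' I : {I : Ideal (𝓞 K) // IsPrimitiveIdeal I}, (Ideal.absNorm I.1 : ℂ) ^ (-s)) =
      (∑' I : {I : Ideal (𝓞 K) // I ≠ ⊥}, (Ideal.absNorm I.1 : ℂ) ^ (-s)) /
        riemannZeta ((n : ℂ) * s) := by
  subst hn
  refine ⟨(summable_norm_absNorm_cpow_neg hs).comp_injective Subtype.val_injective, ?_⟩
  rw [tsum_absNorm_cpow_neg_eq_mul hs, tsum_absNorm_span_natCast_cpow_neg hs,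
    mul_div_cancel_left₀ _ (riemannZeta_ne_zero_of_one_lt_re
      (one_lt_re_natCast_mul Module.finrank_pos.ne' hs))]
end
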